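/- arXiv:cs/0111052 — 4 statements merged into one kernel-verified Lean document; each statement's English description precedes it below -/
import Mathlib

section
/- Let A be an n×n matrix over F_2 with entries a_{kj}, and let B : F_2^n → F_2 be a polynomial function of degree at most 2. Define the quadratically signed weight enumerator S(A,B) = Σ_{x ∈ F_2^n, Ax = 0} (−1)^{B(x)} 2^{|x|} 4^{n−|x|}, where |x| is the Hamming weight of x. Define f : F_2^n × F_2^n × F_2^n × F_2^n → F_2 by f(x,y,z,u) = Σ_{j=1}^n x_j y_j z_j + B(x) + Σ_{k=1}^n u_k (Σ_{j=1}^n a_{kj} x_j). Then Δf = 2^n · S(A,B), where Δf = Σ (−1)^{f(x,y,z,u)} over all 4n-bit inputs. -/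
private lemma chi_add : ∀ a b : ZMod 2,
    ((-1:ℤ))^(a+b).val = (-1:ℤ)^a.val * (-1:ℤ)^b.val := by decide

private lemma chi_sum {ι : Type*} (s : Finset ι) (g : ι → ZMod 2) :
    ((-1:ℤ))^(∑ i ∈ s, g i).val = ∏ i ∈ s, (-1:ℤ)^(g i).val := by
  classical
  induction s using Finset.cons_induction with
  | empty => simp
  | cons a s ha ih => rw [Finset.sum_cons, chi_add, ih, Finset.prod_cons]

private lemma pi_sum {n : ℕ} (g : Fin n → ZMod 2 → ℤ) :
    ∑ u : Fin n → ZMod 2, ∏ k, g k (u k) = ∏ k, ∑ a : ZMod 2, g k a := by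
  classical
  rw [Finset.prod_univ_sum, Fintype.piFinset_univ]

private lemma u_sum : ∀ c : ZMod 2,
    ∑ a : ZMod 2, ((-1:ℤ))^(a*c).val = if c = 0 then 2 else 0 := by decide

private lemma yz_sum : ∀ x : ZMod 2,
    ∑ b : ZMod 2, ∑ c : ZMod 2, ((-1:ℤ))^(x*b*c).val = if x = 1 then 2 else 4 := by decide

private lemma fact {α : Type*} [Fintype α] (a : ℤ) (g : α → α → ℤ) (h : α → ℤ) :
    ∑ y : α, ∑ z : α, ∑ u : α, g y z * a * h u = (a * ∑ y : α, ∑ z : α, g y z) * ∑ u : α, h u := by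
  calc ∑ y : α, ∑ z : α, ∑ u : α, g y z * a * h u
      = ∑ y : α, ∑ z : α, (g y z * a) * ∑ u : α, h u :=
        Finset.sum_congr rfl fun y _ => Finset.sum_congr rfl fun z _ =>
          (Finset.mul_sum _ _ _).symm
    _ = (∑ y : α, ∑ z : α, g y z * a) * ∑ u : α, h u := by
        rw [Finset.sum_mul]
        exact Finset.sum_congr rfl fun y _ => (Finset.sum_mul _ _ _).symm
    _ = (a * ∑ y : α, ∑ z : α, g y z) * ∑ u : α, h u := by
        congr 1
        rw [Finset.mul_sum]
        refine Finset.sum_congr rfl fun y _ => ?_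
        rw [Finset.mul_sum]
        exact Finset.sum_congr rfl fun z _ => mul_comm _ _

theorem stmt_7 (n : ℕ) (A : Matrix (Fin n) (Fin n) (ZMod 2))
    (B : MvPolynomial (Fin n) (ZMod 2)) (hB : B.totalDegree ≤ 2)
    (f : (Fin n → ZMod 2) → (Fin n → ZMod 2) → (Fin n → ZMod 2) → (Fin n → ZMod 2) → ZMod 2)
    (hf : ∀ x y z u, f x y z u =
      (∑ j, x j * y j * z j) + MvPolynomial.eval x B + ∑ k, u k * ∑ j, A k j * x j) :
    ∑ x : Fin n → ZMod 2, ∑ y : Fin n → ZMod 2, ∑ z : Fin n → ZMod 2, ∑ u : Fin n → ZMod 2,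
        (-1 : ℤ) ^ (f x y z u).val =
      2 ^ n * ∑ x ∈ Finset.univ.filter (fun x : Fin n → ZMod 2 => A.mulVec x = 0),
        (-1 : ℤ) ^ (MvPolynomial.eval x B).val *
          2 ^ (Finset.univ.filter (fun j => x j = 1)).card *
          4 ^ (n - (Finset.univ.filter (fun j => x j = 1)).card) := by
  classical
  have key : ∀ x : Fin n → ZMod 2,
      ∑ y : Fin n → ZMod 2, ∑ z : Fin n → ZMod 2, ∑ u : Fin n → ZMod 2,
        (-1:ℤ) ^ (f x y z u).val =
      (-1:ℤ) ^ (MvPolynomial.eval x B).val *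
        (∑ y : Fin n → ZMod 2, ∑ z : Fin n → ZMod 2,
            (-1:ℤ) ^ (∑ j, x j * y j * z j).val) *
        (∑ u : Fin n → ZMod 2, (-1:ℤ) ^ (∑ k, u k * ∑ j, A k j * x j).val) := by
    intro x
    simp only [hf, chi_add]
    exact fact _ _ _
  have hu : ∀ x : Fin n → ZMod 2,
      (∑ u : Fin n → ZMod 2, (-1:ℤ) ^ (∑ k, u k * ∑ j, A k j * x j).val) =
      if A.mulVec x = 0 then 2^n else 0 := by
    intro x
    have h1 : ∀ u : Fin n → ZMod 2, (-1:ℤ) ^ (∑ k, u k * ∑ j, A k j * x j).val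
        = ∏ k, (-1:ℤ) ^ (u k * ∑ j, A k j * x j).val := fun u => chi_sum _ _
    simp only [h1]
    rw [pi_sum (fun k a => (-1:ℤ) ^ (a * ∑ j, A k j * x j).val)]
    simp only [u_sum]
    by_cases h : A.mulVec x = 0
    · have hk : ∀ k, (∑ j, A k j * x j) = 0 := by
        intro k
        have := congrFun h k
        simpa [Matrix.mulVec, dotProduct] using this
      simp [hk, h]
    · rw [if_neg h]
      obtain ⟨k, hk⟩ : ∃ k, (∑ j, A k j * x j) ≠ 0 := by
        by_contra hc
        push_neg at hc
        exact h (funext fun k => by simpa [Matrix.mulVec, dotProduct] using hc k)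
      refine Finset.prod_eq_zero (Finset.mem_univ k) ?_
      simp [hk]
  have hyz : ∀ x : Fin n → ZMod 2,
      (∑ y : Fin n → ZMod 2, ∑ z : Fin n → ZMod 2,
          (-1:ℤ) ^ (∑ j, x j * y j * z j).val) =
      2 ^ (Finset.univ.filter (fun j => x j = 1)).card *
        4 ^ (n - (Finset.univ.filter (fun j => x j = 1)).card) := by
    intro x
    have step : ∀ y : Fin n → ZMod 2,
        (∑ z : Fin n → ZMod 2, (-1:ℤ) ^ (∑ j, x j * y j * z j).val) =
        ∏ j, ∑ c : ZMod 2, (-1:ℤ) ^ (x j * y j * c).val := by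
      intro y
      have h2 : ∀ z : Fin n → ZMod 2, (-1:ℤ) ^ (∑ j, x j * y j * z j).val
          = ∏ j, (-1:ℤ) ^ (x j * y j * z j).val := fun z => chi_sum _ _
      simp only [h2]
      exact pi_sum (fun j c => (-1:ℤ) ^ (x j * y j * c).val)
    simp only [step]
    rw [pi_sum (fun j b => ∑ c : ZMod 2, (-1:ℤ) ^ (x j * b * c).val)]
    simp only [yz_sum]
    rw [Finset.prod_ite, Finset.prod_const, Finset.prod_const]
    congr 1
    have := Finset.card_filter_add_card_filter_not
      (s := (Finset.univ : Finset (Fin n))) (p := fun j => x j = 1)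
    simp only [Finset.card_univ, Fintype.card_fin] at this
    congr 1
    omega
  calc ∑ x : Fin n → ZMod 2, ∑ y : Fin n → ZMod 2, ∑ z : Fin n → ZMod 2,
        ∑ u : Fin n → ZMod 2, (-1 : ℤ) ^ (f x y z u).val
      = ∑ x : Fin n → ZMod 2,
          (-1:ℤ) ^ (MvPolynomial.eval x B).val *
            (2 ^ (Finset.univ.filter (fun j => x j = 1)).card *
              4 ^ (n - (Finset.univ.filter (fun j => x j = 1)).card)) *
            (if A.mulVec x = 0 then (2:ℤ)^n else 0) := by
        refine Finset.sum_congr rfl fun x _ => ?_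
        rw [key x, hyz x, hu x]
    _ = 2 ^ n * ∑ x ∈ Finset.univ.filter (fun x : Fin n → ZMod 2 => A.mulVec x = 0),
        (-1 : ℤ) ^ (MvPolynomial.eval x B).val *
          2 ^ (Finset.univ.filter (fun j => x j = 1)).card *
          4 ^ (n - (Finset.univ.filter (fun j => x j = 1)).card) := by
        rw [Finset.mul_sum, Finset.sum_filter]
        refine Finset.sum_congr rfl fun x _ => ?_
        split_ifs with h
        · ring
        · ring
end

section
/- If φ ∈ R satisfies cos φ = 2/√5, then φ is incommensurable with π; i.e., φ/π is irrational. -/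
/-! Since `√5 cos φ = 2`, the cosine addition formula makes `aₙ = (√5)ⁿ cos (nφ)` an integer
sequence with `a₀ = 1`, `a₁ = 2` and `aₙ₊₂ = 4aₙ₊₁ - 5aₙ`, so `5 ∤ aₙ`. If `φ/π` were rational,
then `cos (nφ) = 1` for some `n > 0`, whence `aₙ² = 5ⁿ`, a contradiction. -/

open Real

def scaledCosSeq (k m : ℤ) : ℕ → ℤ
  | 0 => 1
  | 1 => k
  | n + 2 => 2 * k * scaledCosSeq k m (n + 1) - m * scaledCosSeq k m n

theorem scaledCosSeq_add_two (k m : ℤ) (n : ℕ) :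
    scaledCosSeq k m (n + 2) = 2 * k * scaledCosSeq k m (n + 1) - m * scaledCosSeq k m n :=
  rfl

theorem not_dvd_scaledCosSeq {k m p : ℤ} (hp : Prime p) (hpm : p ∣ m) (hpk : ¬ p ∣ 2 * k)
    (n : ℕ) : ¬ p ∣ scaledCosSeq k m n := by
  induction n using Nat.twoStepInduction with
  | zero => exact hp.not_dvd_one
  | one => exact fun h => hpk (h.mul_left 2)
  | more n _ ih =>
    intro h
    have : p ∣ 2 * k * scaledCosSeq k m (n + 1) := by
      have := h.add (hpm.mul_right (scaledCosSeq k m n))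
      rwa [scaledCosSeq_add_two, sub_add_cancel] at this
    exact (hp.dvd_or_dvd this).elim hpk ih

theorem scaledCosSeq_eq {k m : ℤ} (hm : 0 ≤ m) {φ : ℝ} (hφ : √m * cos φ = k) (n : ℕ) :
    (scaledCosSeq k m n : ℝ) = √m ^ n * cos (n * φ) := by
  have hsq : √m ^ 2 = m := sq_sqrt (by exact_mod_cast hm)
  induction n using Nat.twoStepInduction with
  | zero => simp [scaledCosSeq]
  | one => simp [scaledCosSeq, hφ]
  | more n ih₀ ih₁ =>
    have hcos : cos ((n + 2 : ℕ) * φ) =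
        2 * cos φ * cos ((n + 1 : ℕ) * φ) - cos (n * φ) := by
      have h₂ : ((n + 2 : ℕ) : ℝ) * φ = (n + 1 : ℕ) * φ + φ := by push_cast; ring
      have h₀ : (n : ℝ) * φ = (n + 1 : ℕ) * φ - φ := by push_cast; ring
      rw [h₂, h₀, cos_add, cos_sub]
      ring
    rw [scaledCosSeq_add_two, hcos]
    push_cast at ih₁ ⊢
    rw [ih₀, ih₁]
    linear_combination (-2 * √m ^ (n + 1) * cos ((n + 1) * φ)) * hφ + (√m ^ n * cos (n * φ)) * hsq

theorem exists_cos_nat_mul_eq_one {φ : ℝ} (h : ¬ Irrational (φ / π)) :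
    ∃ n : ℕ, 0 < n ∧ cos (n * φ) = 1 := by
  obtain ⟨r, hr⟩ : ∃ r : ℚ, (r : ℝ) = φ / π := by simpa [Irrational] using h
  refine ⟨2 * r.den, by positivity, ?_⟩
  have hφ : φ = r * π := by rw [hr, div_mul_cancel₀ _ pi_ne_zero]
  have hden : (r.den : ℝ) * r = r.num := by exact_mod_cast Rat.den_mul_eq_num r
  have : ((2 * r.den : ℕ) : ℝ) * φ = r.num * (2 * π) := by
    rw [hφ, ← hden]; push_cast; ring
  rw [this, cos_int_mul_two_pi]

theorem irrational_div_pi_of_sqrt_mul_cos_eq {k m p : ℤ} (hp : Prime p) (hpm : p ∣ m)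
    (hpk : ¬ p ∣ 2 * k) (hm : 0 ≤ m) {φ : ℝ} (hφ : √m * cos φ = k) : Irrational (φ / π) := by
  by_contra h
  obtain ⟨n, hn, hcos⟩ := exists_cos_nat_mul_eq_one h
  have hsq : scaledCosSeq k m n ^ 2 = m ^ n := by
    have haₙ := scaledCosSeq_eq hm hφ n
    rw [hcos, mul_one] at haₙ
    have : (scaledCosSeq k m n : ℝ) ^ 2 = m ^ n := by
      rw [haₙ, ← pow_mul, mul_comm, pow_mul, sq_sqrt (by exact_mod_cast hm)]
    exact_mod_cast this
  have hdvd : p ∣ scaledCosSeq k m n ^ 2 := hsq ▸ dvd_pow hpm hn.ne'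
  exact not_dvd_scaledCosSeq hp hpm hpk n (hp.dvd_of_dvd_pow hdvd)

theorem stmt_14 (φ : ℝ) (hφ : Real.cos φ = 2 / Real.sqrt 5) :
    Irrational (φ / Real.pi) := by
  refine irrational_div_pi_of_sqrt_mul_cos_eq (k := 2) (m := 5)
    (Int.prime_iff_natAbs_prime.mpr (by norm_num)) dvd_rfl (by decide) (by norm_num) ?_
  rw [hφ]
  push_cast
  field_simp
end

section
/- Let s_1,…,s_N ∈ F_2^{2n} with s_j = (α_{j1},β_{j1},…,α_{jn},β_{jn}), let φ ∈ R, and let A be the N×n matrix over F_2 with entries α_{jk}. Then ⟨0| Π_{j=1}^N exp(iφ σ(s_j)) |0⟩ = Σ_{x ∈ F_2^N, A^T x = 0} (cos φ)^{N−|x|} (i sin φ)^{|x|} ⟨0| Π_{j : x_j=1} σ(s_j) |0⟩, where the products are taken in order of increasing j and |x| is the Hamming weight of x. -/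
/-!
Since `σ(s)² = I`, the exponential series splits into even and odd parts and
`exp(iφ σ(s)) = cos φ · I + i sin φ · σ(s)`. Expanding the ordered product of these binomials
gives one term per `x ∈ 𝔽₂ᴺ`, namely `(cos φ)^(N-|x|) (i sin φ)^|x|` times the ordered product of
the `σ(s_j)` with `x_j = 1`. A tensor product of Pauli matrices maps a basis vector `|r⟩` to a
multiple of `|r + α⟩`, so that product has zero `⟨0|·|0⟩` entry unless `∑_j x_j α_j = 0`.
-/

/-- Entry `(r, c)` of the Pauli matrix `σ_{αβ}`, with indices in `ZMod 2`. -/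
noncomputable def pauliEntry (α β r c : ZMod 2) : ℂ :=
  if α = 0 then
    (if r = c then (if β = 1 ∧ r = 1 then -1 else 1) else 0)
  else
    (if r = c then 0 else
      if β = 0 then 1 else (if c = 0 then -Complex.I else Complex.I))

open Finset Matrix NormedSpace

theorem exp_I_mul_smul_of_mul_self_eq_one {A : Type*} [Ring A] [Algebra ℂ A] [TopologicalSpace A]
    [IsTopologicalRing A] [ContinuousSMul ℂ A] [T2Space A] {a : A} (ha : a * a = 1) (φ : ℝ) :
    exp ((Complex.I * (φ : ℂ)) • a) =
      (Real.cos φ : ℂ) • (1 : A) + (Complex.I * (Real.sin φ : ℂ)) • a := by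
  have ha2 : ∀ k : ℕ, a ^ (2 * k) = 1 := fun k => by rw [pow_mul, sq, ha, one_pow]
  rw [exp_eq_tsum ℂ]
  refine HasSum.tsum_eq (HasSum.even_add_odd ?_ ?_)
  · have hcos := (Complex.hasSum_cos' (φ : ℂ)).smul_const (1 : A)
    rw [← Complex.ofReal_cos] at hcos
    convert hcos using 2 with k
    rw [smul_pow, ha2, smul_smul]
    ring_nf
  · have hsin := ((Complex.hasSum_sin' (φ : ℂ)).mul_right Complex.I).smul_const a
    rw [← Complex.ofReal_sin] at hsin
    convert hsin using 2 with k
    · rw [smul_pow, pow_succ a, ha2, one_mul, smul_smul, div_mul_cancel₀ _ Complex.I_ne_zero]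
      ring_nf
    · rw [mul_comm]

theorem List.prod_ofFn_sum {R κ : Type*} [Semiring R] [Fintype κ] :
    ∀ {N : ℕ} (f : Fin N → κ → R),
      (List.ofFn fun j => ∑ c, f j c).prod = ∑ x : Fin N → κ, (List.ofFn fun j => f j (x j)).prod
  | 0, f => by simp
  | N + 1, f => by
    rw [List.ofFn_succ, List.prod_cons, List.prod_ofFn_sum, Finset.sum_mul_sum,
      ← Fintype.sum_prod_type', ← (Fin.consEquiv fun _ => κ).sum_comp]
    simp [Fin.consEquiv, List.ofFn_succ]

theorem List.prod_map_ite_smul {R A ι : Type*} [CommSemiring R] [Semiring A] [Algebra R A]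
    (p : ι → Bool) (M : ι → A) (c d : R) (l : List ι) :
    (l.map fun j => if p j then d • M j else c • 1).prod =
      (c ^ l.countP (fun j => !p j) * d ^ l.countP p) • ((l.filter p).map M).prod := by
  induction l with
  | nil => simp
  | cons j l ih =>
    by_cases hj : p j <;> simp [ih, hj, pow_succ, smul_smul, mul_comm, mul_left_comm, mul_assoc]

theorem List.countP_finRange {N : ℕ} (p : Fin N → Bool) :
    (List.finRange N).countP p = (univ.filter fun j => p j).card := by
  rw [List.countP_eq_length_filter]
  simp [Fin.univ_def, Finset.filter, Finset.card]

theorem List.sum_map_filter_finRange {M : Type*} [AddCommMonoid M] {N : ℕ} (p : Fin N → Bool)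
    (f : Fin N → M) :
    (((List.finRange N).filter p).map f).sum = ∑ j ∈ univ.filter fun j => p j, f j := by
  simp [Fin.univ_def, Finset.sum, Finset.filter]

theorem List.prod_map_finRange_ite_smul {R A : Type*} [CommSemiring R] [Semiring A]
    [Algebra R A] {N : ℕ} (p : Fin N → Prop) [DecidablePred p] (M : Fin N → A) (c d : R) :
    ((List.finRange N).map fun j => if p j then d • M j else c • 1).prod =
      (c ^ (N - (univ.filter p).card) * d ^ (univ.filter p).card) •
        (((List.finRange N).filter fun j => p j).map M).prod := by
  have hcount := card_filter_add_card_filter_not (s := univ) p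
  have hprod := List.prod_map_ite_smul (fun j => decide (p j)) M c d (List.finRange N)
  simp only [List.countP_finRange, decide_eq_true_eq, Bool.not_eq_true',
    decide_eq_false_iff_not] at hprod
  rw [card_univ, Fintype.card_fin] at hcount
  rw [hprod]
  congr 3
  omega

theorem ZMod.two_cases (z : ZMod 2) : z = 0 ∨ z = 1 := by decide +revert

theorem ZMod.sum_two {M : Type*} [AddCommMonoid M] (f : ZMod 2 → M) : ∑ c, f c = f 0 + f 1 :=
  Fin.sum_univ_two f

theorem ZMod.sum_mul_eq_sum_filter {ι : Type*} (s : Finset ι) (f x : ι → ZMod 2) :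
    ∑ j ∈ s, f j * x j = ∑ j ∈ s with x j = 1, f j := by
  rw [sum_filter]
  refine sum_congr rfl fun j _ => ?_
  rcases ZMod.two_cases (x j) with h | h <;> simp [h]

namespace Matrix

def piKronecker {ι κ μ R : Type*} [Fintype ι] [CommMonoid R] (P : ι → Matrix κ μ R) :
    Matrix (ι → κ) (ι → μ) R :=
  of fun x y => ∏ k, P k (x k) (y k)

def SupportedOnShift {G R : Type*} [Add G] [Zero R] (M : Matrix G G R) (v : G) : Prop :=
  ∀ x y, y ≠ x + v → M x y = 0

variable {ι κ μ ν G R : Type*} [Fintype ι] [CommSemiring R]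

theorem piKronecker_apply (P : ι → Matrix κ μ R) (x : ι → κ) (y : ι → μ) :
    piKronecker P x y = ∏ k, P k (x k) (y k) := rfl

theorem piKronecker_mul [DecidableEq ι] [Fintype μ] (P : ι → Matrix κ μ R)
    (Q : ι → Matrix μ ν R) : piKronecker P * piKronecker Q = piKronecker fun k => P k * Q k := by
  ext x y
  simp only [mul_apply, piKronecker_apply, prod_univ_sum, Fintype.piFinset_univ,
    prod_mul_distrib]

theorem piKronecker_one [DecidableEq ι] [DecidableEq κ] :
    piKronecker (fun _ : ι => (1 : Matrix κ κ R)) = 1 := by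
  ext x y
  simp [piKronecker_apply, one_apply, prod_boole, funext_iff]

theorem supportedOnShift_one [AddZeroClass G] [DecidableEq G] :
    (1 : Matrix G G R).SupportedOnShift 0 :=
  fun _ _ h => one_apply_ne' (by simpa using h)

theorem SupportedOnShift.mul [AddSemigroup G] [Fintype G] {M M' : Matrix G G R} {v w : G}
    (hM : M.SupportedOnShift v) (hM' : M'.SupportedOnShift w) :
    (M * M').SupportedOnShift (v + w) := by
  intro x y hxy
  refine sum_eq_zero fun z _ => ?_
  by_cases hz : z = x + v
  · exact mul_eq_zero_of_right _ (hM' z y (by rwa [hz, add_assoc]))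
  · exact mul_eq_zero_of_left (hM x z hz) _

theorem SupportedOnShift.list_prod [AddMonoid G] [Fintype G] [DecidableEq G] {α : Type*}
    {M : α → Matrix G G R} {v : α → G} (h : ∀ j, (M j).SupportedOnShift (v j)) :
    ∀ l : List α, ((l.map M).prod).SupportedOnShift (l.map v).sum
  | [] => supportedOnShift_one
  | j :: l => by simpa using (h j).mul (SupportedOnShift.list_prod h l)

theorem supportedOnShift_piKronecker [Add G] {P : ι → Matrix G G R} {v : ι → G}
    (h : ∀ k, (P k).SupportedOnShift (v k)) : (piKronecker P).SupportedOnShift v := by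
  intro x y hxy
  obtain ⟨k, hk⟩ : ∃ k, y k ≠ x k + v k := by
    by_contra! hc
    exact hxy (funext hc)
  exact prod_eq_zero (mem_univ k) (h k _ _ hk)

end Matrix

noncomputable def pauli (a b : ZMod 2) : Matrix (ZMod 2) (ZMod 2) ℂ := of (pauliEntry a b)

theorem pauli_mul_self (a b : ZMod 2) : pauli a b * pauli a b = 1 := by
  ext r s
  rw [mul_apply, ZMod.sum_two]
  rcases ZMod.two_cases a with rfl | rfl <;> rcases ZMod.two_cases b with rfl | rfl <;>
    rcases ZMod.two_cases r with rfl | rfl <;> rcases ZMod.two_cases s with rfl | rfl <;>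
    simp [pauli, pauliEntry]

theorem supportedOnShift_pauli (a b : ZMod 2) : (pauli a b).SupportedOnShift a := by
  intro r c h
  rcases ZMod.two_cases a with rfl | rfl <;> rcases ZMod.two_cases r with rfl | rfl <;>
    rcases ZMod.two_cases c with rfl | rfl <;>
    simp_all [pauli, pauliEntry, show (1 + 1 : ZMod 2) = 0 from rfl]

theorem list_prod_filter_apply_zero_eq_zero {R : Type*} [CommSemiring R] {n N : ℕ}
    {α : Fin N → Fin n → ZMod 2} {σ : Fin N → Matrix (Fin n → ZMod 2) (Fin n → ZMod 2) R}
    (hσ : ∀ j, (σ j).SupportedOnShift (α j)) {x : Fin N → ZMod 2}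
    (hx : ¬ ∀ k, ∑ j, α j k * x j = 0) :
    (((List.finRange N).filter fun j => x j = 1).map σ).prod 0 0 = 0 := by
  refine SupportedOnShift.list_prod hσ _ 0 0 fun h0 => hx fun k => ?_
  rw [zero_add, List.sum_map_filter_finRange] at h0
  simpa [ZMod.sum_mul_eq_sum_filter] using (congrFun h0 k).symm

theorem stmt_16 (n N : ℕ) (α β : Fin N → Fin n → ZMod 2) (φ : ℝ)
    (σ : Fin N → Matrix (Fin n → ZMod 2) (Fin n → ZMod 2) ℂ)
    (hσ : ∀ j x y, (σ j) x y = ∏ k, pauliEntry (α j k) (β j k) (x k) (y k)) :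
    (((List.finRange N).map fun j =>
        NormedSpace.exp ((Complex.I * (φ : ℂ)) • σ j)).prod) 0 0 =
      ∑ x ∈ Finset.univ.filter (fun x : Fin N → ZMod 2 => ∀ k, ∑ j, α j k * x j = 0),
        (Real.cos φ : ℂ) ^ (N - (Finset.univ.filter (fun j => x j = 1)).card) *
          (Complex.I * (Real.sin φ : ℂ)) ^ (Finset.univ.filter (fun j => x j = 1)).card *
          ((((List.finRange N).filter fun j => x j = 1).map σ).prod 0 0) := by
  set c : ℂ := (Real.cos φ : ℂ)
  set d : ℂ := Complex.I * (Real.sin φ : ℂ)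
  have hσ_eq : ∀ j, σ j = piKronecker fun k => pauli (α j k) (β j k) := fun j => by
    ext x y
    exact hσ j x y
  have hshift : ∀ j, (σ j).SupportedOnShift (α j) := fun j =>
    hσ_eq j ▸ supportedOnShift_piKronecker fun k => supportedOnShift_pauli _ _
  -- each factor is a sum over `e ∈ 𝔽₂`, so expanding the product indexes terms by `x ∈ 𝔽₂ᴺ`
  have hexp : ∀ j, exp ((Complex.I * (φ : ℂ)) • σ j) =
      ∑ e : ZMod 2, if e = 1 then d • σ j else c • 1 := fun j => by
    have hsq : σ j * σ j = 1 := by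
      simp only [hσ_eq, piKronecker_mul, pauli_mul_self, piKronecker_one]
    rw [exp_I_mul_smul_of_mul_self_eq_one hsq, ZMod.sum_two, if_neg zero_ne_one, if_pos rfl]
  simp_rw [hexp, ← List.ofFn_eq_map, List.prod_ofFn_sum, List.ofFn_eq_map, Matrix.sum_apply,
    List.prod_map_finRange_ite_smul]
  rw [sum_filter_of_ne fun x _ hx => ?_]
  · simp
  · by_contra hker
    exact hx (by rw [list_prod_filter_apply_zero_eq_zero hshift hker, mul_zero])
end

section
/- Let g : F_2^{4n} → F_2 be the polynomial g(x,y,z,u) = Σ_{j=1}^n x_j y_j z_j + B(x) + Σ_k u_k (Σ_j a_{kj} x_j) where B has degree at most 2 and A = (a_{kj}) is a Boolean matrix. Then g has degree at most 3, and the sign of Δg equals the sign of the quadratically signed weight enumerator S(A,B) = Σ_{Ax=0} (−1)^{B(x)} 2^{|x|} 4^{n−|x|}. -/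
/-!
Write the points of `F₂^{4n}` as `(x, y, z, u)`. Summing `(-1)^g` over `u` first gives
`2^n` when `A x = 0` and `0` otherwise (orthogonality of the characters `u ↦ (-1)^{u·c}`),
and the sum over `y, z` of `(-1)^{Σ xⱼyⱼzⱼ}` factors over the coordinates, contributing `4`
where `xⱼ = 0` and `2` where `xⱼ = 1`. Hence `Δg = 2^n S(A,B)`, and `2^n > 0` preserves the sign.
-/

open Finset MvPolynomial
open scoped Matrix

lemma neg_one_pow_val_add (a b : ZMod 2) :
    (-1 : ℤ) ^ (a + b).val = (-1) ^ a.val * (-1) ^ b.val := by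
  revert a b; decide

lemma neg_one_pow_val_sum {ι : Type*} (s : Finset ι) (f : ι → ZMod 2) :
    (-1 : ℤ) ^ (∑ i ∈ s, f i).val = ∏ i ∈ s, (-1 : ℤ) ^ (f i).val := by
  induction s using Finset.cons_induction with
  | empty => simp
  | cons a s ha ih => rw [sum_cons, prod_cons, neg_one_pow_val_add, ih]

lemma Fintype.sum_sumElim_arrow {α β γ M : Type*} [Fintype α] [Fintype β] [Fintype γ]
    [DecidableEq α] [DecidableEq β] [AddCommMonoid M] (f : (α ⊕ β → γ) → M) :
    ∑ w, f w = ∑ x : α → γ, ∑ y : β → γ, f (Sum.elim x y) := by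
  rw [← (Equiv.sumArrowEquivProdArrow α β γ).symm.sum_comp, Fintype.sum_prod_type]
  rfl

section CharacterSums

variable {ι : Type*} [Fintype ι] [DecidableEq ι]

lemma prod_ite_eq_zero_four_two (x : ι → ZMod 2) :
    ∏ j, (if x j = 0 then (4 : ℤ) else 2) =
      2 ^ #{j | x j = 1} * 4 ^ (Fintype.card ι - #{j | x j = 1}) := by
  have h1 (a : ZMod 2) : (if a = 0 then (4 : ℤ) else 2) = if a = 1 then 2 else 4 := by
    revert a; decide
  simp_rw [h1, prod_ite, prod_const, ← card_compl, compl_filter]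

lemma sum_neg_one_pow_val_dotProduct (c : ι → ZMod 2) :
    ∑ u : ι → ZMod 2, (-1 : ℤ) ^ (u ⬝ᵥ c).val =
      if c = 0 then 2 ^ Fintype.card ι else 0 := by
  have h1 (a : ZMod 2) : ∑ t : ZMod 2, (-1 : ℤ) ^ (t * a).val = if a = 0 then 2 else 0 := by
    revert a; decide
  simp_rw [dotProduct, neg_one_pow_val_sum]
  rw [← Fintype.prod_sum (fun i t => (-1 : ℤ) ^ (t * c i).val)]
  simp_rw [h1, prod_ite_zero, funext_iff]
  simp

lemma sum_sum_neg_one_pow_val_sum_mul_mul (x : ι → ZMod 2) :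
    ∑ y : ι → ZMod 2, ∑ z : ι → ZMod 2, (-1 : ℤ) ^ (∑ j, x j * y j * z j).val =
      ∏ j, if x j = 0 then 4 else 2 := by
  have h1 (a : ZMod 2) :
      ∑ s : ZMod 2, ∑ t : ZMod 2, (-1 : ℤ) ^ (a * s * t).val = if a = 0 then 4 else 2 := by
    revert a; decide
  simp_rw [neg_one_pow_val_sum, ← h1, Fintype.prod_sum]

end CharacterSums

section CubicLift

variable {ι κ : Type*} [Fintype ι] [Fintype κ]

noncomputable def cubicLift (A : Matrix κ ι (ZMod 2)) (B : MvPolynomial ι (ZMod 2)) :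
    MvPolynomial (ι ⊕ ι ⊕ ι ⊕ κ) (ZMod 2) :=
  (∑ j, X (Sum.inl j) * X (Sum.inr (Sum.inl j)) * X (Sum.inr (Sum.inr (Sum.inl j))))
    + rename Sum.inl B
    + ∑ k, X (Sum.inr (Sum.inr (Sum.inr k))) * ∑ j, C (A k j) * X (Sum.inl j)

lemma totalDegree_cubicLift_le (A : Matrix κ ι (ZMod 2)) {B : MvPolynomial ι (ZMod 2)}
    (hB : B.totalDegree ≤ 2) : (cubicLift A B).totalDegree ≤ 3 := by
  have hX (s : ι ⊕ ι ⊕ ι ⊕ κ) : (X s : MvPolynomial _ (ZMod 2)).totalDegree ≤ 1 :=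
    (totalDegree_X s).le
  have hmul {p q : MvPolynomial (ι ⊕ ι ⊕ ι ⊕ κ) (ZMod 2)} {a b : ℕ}
      (hp : p.totalDegree ≤ a) (hq : q.totalDegree ≤ b) : (p * q).totalDegree ≤ a + b :=
    (totalDegree_mul p q).trans (add_le_add hp hq)
  have hcubic : (∑ j, X (Sum.inl j) * X (Sum.inr (Sum.inl j)) *
      X (Sum.inr (Sum.inr (Sum.inl j))) : MvPolynomial (ι ⊕ ι ⊕ ι ⊕ κ) (ZMod 2)).totalDegree ≤ 3 :=
    totalDegree_finsetSum_le fun j _ => hmul (hmul (hX _) (hX _)) (hX _)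
  have hquadratic :
      (rename Sum.inl B : MvPolynomial (ι ⊕ ι ⊕ ι ⊕ κ) (ZMod 2)).totalDegree ≤ 3 :=
    (totalDegree_rename_le _ _).trans (hB.trans (by norm_num))
  have hlinear : (∑ k, X (Sum.inr (Sum.inr (Sum.inr k))) * ∑ j, C (A k j) * X (Sum.inl j) :
      MvPolynomial (ι ⊕ ι ⊕ ι ⊕ κ) (ZMod 2)).totalDegree ≤ 2 :=
    totalDegree_finsetSum_le fun k _ => hmul (hX _) <| totalDegree_finsetSum_le fun j _ =>
      (hmul (totalDegree_C _).le (hX _)).trans_eq (zero_add 1)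
  exact (totalDegree_add _ _).trans <|
    max_le ((totalDegree_add _ _).trans (max_le hcubic hquadratic)) (hlinear.trans (by norm_num))

lemma eval_cubicLift (A : Matrix κ ι (ZMod 2)) (B : MvPolynomial ι (ZMod 2))
    (x y z : ι → ZMod 2) (u : κ → ZMod 2) :
    eval (Sum.elim x (Sum.elim y (Sum.elim z u))) (cubicLift A B) =
      ∑ j, x j * y j * z j + eval x B + u ⬝ᵥ (A *ᵥ x) := by
  simp [cubicLift, eval_rename, dotProduct, Matrix.mulVec]

variable [DecidableEq ι] [DecidableEq κ]

noncomputable def signedWeightEnumerator (A : Matrix κ ι (ZMod 2))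
    (B : MvPolynomial ι (ZMod 2)) : ℤ :=
  ∑ x ∈ univ.filter (fun x : ι → ZMod 2 => A *ᵥ x = 0),
    (-1 : ℤ) ^ (eval x B).val * 2 ^ #{j | x j = 1} * 4 ^ (Fintype.card ι - #{j | x j = 1})

theorem sum_neg_one_pow_eval_cubicLift (A : Matrix κ ι (ZMod 2)) (B : MvPolynomial ι (ZMod 2)) :
    ∑ w, (-1 : ℤ) ^ (eval w (cubicLift A B)).val =
      2 ^ Fintype.card κ * signedWeightEnumerator A B := by
  have hx (x : ι → ZMod 2) : ∑ y : ι → ZMod 2, ∑ z : ι → ZMod 2, ∑ u : κ → ZMod 2,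
      (-1 : ℤ) ^ (eval (Sum.elim x (Sum.elim y (Sum.elim z u))) (cubicLift A B)).val =
      (-1 : ℤ) ^ (eval x B).val * (∏ j, if x j = 0 then 4 else 2) *
        if A *ᵥ x = 0 then 2 ^ Fintype.card κ else 0 := by
    simp_rw [eval_cubicLift, neg_one_pow_val_add, ← mul_sum, ← sum_mul,
      sum_neg_one_pow_val_dotProduct, sum_sum_neg_one_pow_val_sum_mul_mul]
    ring
  simp_rw [Fintype.sum_sumElim_arrow, hx, prod_ite_eq_zero_four_two, mul_ite, mul_zero,
    ← sum_filter, signedWeightEnumerator, mul_sum]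
  exact sum_congr rfl fun x _ => by ring

end CubicLift

open MvPolynomial in
theorem stmt_19 (n : ℕ) (A : Matrix (Fin n) (Fin n) (ZMod 2))
    (B : MvPolynomial (Fin n) (ZMod 2)) (hB : B.totalDegree ≤ 2)
    (g : MvPolynomial (Fin n ⊕ Fin n ⊕ Fin n ⊕ Fin n) (ZMod 2))
    (hg : g = (∑ j, X (Sum.inl j) * X (Sum.inr (Sum.inl j)) * X (Sum.inr (Sum.inr (Sum.inl j))))
        + MvPolynomial.rename Sum.inl B
        + ∑ k, X (Sum.inr (Sum.inr (Sum.inr k))) * ∑ j, C (A k j) * X (Sum.inl j)) :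
    g.totalDegree ≤ 3 ∧
    Int.sign (∑ w : (Fin n ⊕ Fin n ⊕ Fin n ⊕ Fin n) → ZMod 2, (-1 : ℤ) ^ (eval w g).val) =
      Int.sign (∑ x ∈ Finset.univ.filter (fun x : Fin n → ZMod 2 => A.mulVec x = 0),
        (-1 : ℤ) ^ (eval x B).val *
          2 ^ (Finset.univ.filter (fun j => x j = 1)).card *
          4 ^ (n - (Finset.univ.filter (fun j => x j = 1)).card)) := by
  change g = cubicLift A B at hg
  subst hg
  refine ⟨totalDegree_cubicLift_le A hB, ?_⟩
  rw [sum_neg_one_pow_eval_cubicLift, Int.sign_mul, Int.sign_eq_one_of_pos (by positivity),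
    one_mul]
  simp [signedWeightEnumerator]
end
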